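/- arXiv:2503.07543 — 5 statements merged into one kernel-verified Lean document; each statement's English description precedes it below -/
import Mathlib

section
/- Let M be a monoid with elements T_1, …, T_{κ−1} satisfying the braid relations T_i T_{i+1} T_i = T_{i+1} T_i T_{i+1} for 1 ≤ i ≤ κ−2 and T_i T_j = T_j T_i for |i−j| > 1. Define Z = T_1 T_2 ⋯ T_{κ−2} T_{κ−1}² T_{κ−2} ⋯ T_2 T_1. Then Z T_j = T_j Z for every j with 2 ≤ j ≤ κ−1. -/
private lemma braid_auxL {M : Type*} [Monoid M] {a b c : M}
    (hbr : b * a * b = a * b * a) (hc : a * c = c * a) :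
    (c * b * a) * b = a * (c * b * a) := by
  calc (c * b * a) * b = c * (b * a * b) := by simp [mul_assoc]
    _ = c * (a * b * a) := by rw [hbr]
    _ = (c * a) * (b * a) := by simp [mul_assoc]
    _ = (a * c) * (b * a) := by rw [← hc]
    _ = a * (c * b * a) := by simp [mul_assoc]

private lemma braid_auxR {M : Type*} [Monoid M] {a b c : M}
    (hbr : b * a * b = a * b * a) (hc : a * c = c * a) :
    (a * b * c) * a = b * (a * b * c) := by
  calc (a * b * c) * a = (a * b) * (c * a) := by simp [mul_assoc]
    _ = (a * b) * (a * c) := by rw [← hc]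
    _ = (a * b * a) * c := by simp [mul_assoc]
    _ = (b * a * b) * c := by rw [← hbr]
    _ = b * (a * b * c) := by simp [mul_assoc]

section FullTwistAux
variable {M : Type*} [Monoid M] (κ : ℕ) (T : ℕ → M)

/-- `Lp k = T₁ T₂ ⋯ T_k`. -/
private def Lp (k : ℕ) : M := ((List.range' 1 k).map T).prod
/-- `Rp k = T_k ⋯ T₂ T₁`. -/
private def Rp (k : ℕ) : M := ((List.range' 1 k).reverse.map T).prod

private lemma Lp_succ (k : ℕ) : Lp T (k + 1) = Lp T k * T (k + 1) := by
  simp [Lp, List.range'_concat, Nat.add_comm]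

private lemma Rp_succ (k : ℕ) : Rp T (k + 1) = T (k + 1) * Rp T k := by
  simp [Rp, List.range'_concat, Nat.add_comm]

variable (hcomm : ∀ i j : ℕ, 1 ≤ i → 1 ≤ j → i + 1 ≤ κ → j + 1 ≤ κ →
      (i + 1 < j ∨ j + 1 < i) → T i * T j = T j * T i)

include hcomm in
/-- `T_m` commutes with `T₁ ⋯ T_n` when `m ≥ n + 2`. -/
private lemma comm_Lp (n m : ℕ) (h1 : n + 2 ≤ m) (h2 : m + 1 ≤ κ) :
    T m * Lp T n = Lp T n * T m := by
  induction n with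
  | zero => simp [Lp]
  | succ n ih =>
    rw [Lp_succ, ← mul_assoc, ih (by omega), mul_assoc,
      hcomm m (n + 1) (by omega) (by omega) h2 (by omega) (by omega), mul_assoc]

include hcomm in
/-- `T_m` commutes with `T_n ⋯ T₁` when `m ≥ n + 2`. -/
private lemma comm_Rp (n m : ℕ) (h1 : n + 2 ≤ m) (h2 : m + 1 ≤ κ) :
    T m * Rp T n = Rp T n * T m := by
  induction n with
  | zero => simp [Rp]
  | succ n ih =>
    rw [Rp_succ, ← mul_assoc,
      hcomm m (n + 1) (by omega) (by omega) h2 (by omega) (by omega),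
      mul_assoc, ih (by omega), ← mul_assoc]

variable (hbraid : ∀ i : ℕ, 1 ≤ i → i + 2 ≤ κ →
      T i * T (i + 1) * T i = T (i + 1) * T i * T (i + 1))

include hcomm hbraid in
private lemma Lp_mul (k : ℕ) : ∀ i : ℕ, 1 ≤ i → i + 1 ≤ k → k + 1 ≤ κ →
    Lp T k * T i = T (i + 1) * Lp T k := by
  induction k with
  | zero => intro i h1 h2 _; omega
  | succ k ih =>
    intro i h1 h2 hk
    rcases Nat.lt_or_ge (i + 1) (k + 1) with h | h
    · rw [Lp_succ, mul_assoc,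
        ← hcomm i (k + 1) h1 (by omega) (by omega) hk (by omega),
        ← mul_assoc, ih i h1 (by omega) (by omega), mul_assoc]
    · -- i = k, so k ≥ 1; write k = m + 1
      have hik : i = k := by omega
      subst hik
      obtain ⟨m, rfl⟩ : ∃ m, i = m + 1 := ⟨i - 1, by omega⟩
      rw [Lp_succ, Lp_succ]
      exact braid_auxL (hbraid (m + 1) (by omega) (by omega))
        (comm_Lp κ T hcomm m (m + 2) (by omega) (by omega))

include hcomm hbraid in
private lemma Rp_mul (k : ℕ) : ∀ j : ℕ, 1 ≤ j → j + 1 ≤ k → k + 1 ≤ κ →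
    Rp T k * T (j + 1) = T j * Rp T k := by
  induction k with
  | zero => intro j h1 h2 _; omega
  | succ k ih =>
    intro j h1 h2 hk
    rcases Nat.lt_or_ge (j + 1) (k + 1) with h | h
    · rw [Rp_succ, mul_assoc, ih j h1 (by omega) (by omega), ← mul_assoc,
        hcomm (k + 1) j (by omega) h1 hk (by omega) (by omega), mul_assoc]
    · -- j = k, k ≥ 1; write k = m + 1, j = m + 1
      have hjk : j = k := by omega
      subst hjk
      obtain ⟨m, rfl⟩ : ∃ m, j = m + 1 := ⟨j - 1, by omega⟩
      rw [Rp_succ, Rp_succ, ← mul_assoc]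
      exact braid_auxR (hbraid (m + 1) (by omega) (by omega))
        (comm_Rp κ T hcomm m (m + 2) (by omega) (by omega))

end FullTwistAux

/-- The element `Z = T₁ T₂ ⋯ T_{κ−2} T_{κ−1}² T_{κ−2} ⋯ T₂ T₁`
`= (T₁ ⋯ T_{κ−1}) · (T_{κ−1} ⋯ T₁)`, written as a product over lists. -/
def fullTwist {M : Type*} [Monoid M] (κ : ℕ) (T : ℕ → M) : M :=
  (((List.range' 1 (κ - 1)).map T).prod) * ((((List.range' 1 (κ - 1)).reverse.map T).prod))

/-- In a monoid with elements `T₁, …, T_{κ−1}` satisfying the braid relations,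
the element `Z = T₁ ⋯ T_{κ−2} T_{κ−1}² T_{κ−2} ⋯ T₁` commutes with every `T_j`
for `2 ≤ j ≤ κ−1`. -/
theorem fullTwist_commutes {M : Type*} [Monoid M] (κ : ℕ) (T : ℕ → M)
    (hbraid : ∀ i : ℕ, 1 ≤ i → i + 2 ≤ κ →
      T i * T (i + 1) * T i = T (i + 1) * T i * T (i + 1))
    (hcomm : ∀ i j : ℕ, 1 ≤ i → 1 ≤ j → i + 1 ≤ κ → j + 1 ≤ κ →
      (i + 1 < j ∨ j + 1 < i) → T i * T j = T j * T i) :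
    ∀ j : ℕ, 2 ≤ j → j + 1 ≤ κ →
      fullTwist κ T * T j = T j * fullTwist κ T := by
  intro j hj hjκ
  obtain ⟨i, rfl⟩ : ∃ i, j = i + 1 := ⟨j - 1, by omega⟩
  have hZ : fullTwist κ T = Lp T (κ - 1) * Rp T (κ - 1) := rfl
  rw [hZ, mul_assoc,
    Rp_mul κ T hcomm hbraid (κ - 1) i (by omega) (by omega) (by omega),
    ← mul_assoc,
    Lp_mul κ T hcomm hbraid (κ - 1) i (by omega) (by omega) (by omega),
    mul_assoc]
end

section
/- Let A be a Z-graded differential graded algebra over Z[ħ] (ħ central of even degree, d a degree +1 derivation with graded Leibniz rule and d² = 0). Suppose T, T' ∈ A have degree 0 with dT = dT' = 0, T is a unit with T² = 1 + ħT, and x ∈ A has degree −1 with dx = T T' T − 1 and x T' = T' x. Then d(T⁻¹ x T⁻¹ x + x T⁻¹ x T) = 0. -/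
/-- Main computation for well-definedness of the dga `H_κ`:
let `A` be a ℤ-graded differential graded algebra over `ℤ[ħ]` (with `ħ = hbar`
central of even degree, `d` an additive map of degree `+1` satisfying the graded
Leibniz rule and `d² = 0`).  Suppose `T, T'` have degree `0` with `dT = dT' = 0`,
`T` is a unit (with inverse `Tinv`) satisfying `T² = 1 + ħT`, and `x` has
degree `−1` with `dx = T T' T − 1` and `x T' = T' x`.  Then
`d(T⁻¹ x T⁻¹ x + x T⁻¹ x T) = 0`. -/
theorem dga_relation_preserved {A : Type*} [Ring A]
    (𝒜 : ℤ → AddSubgroup A) [GradedRing 𝒜]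
    (d : A →+ A)
    (hd_deg : ∀ (i : ℤ) (a : A), a ∈ 𝒜 i → d a ∈ 𝒜 (i + 1))
    (hd2 : ∀ a : A, d (d a) = 0)
    (hleibniz : ∀ (i : ℤ) (a b : A), a ∈ 𝒜 i →
      d (a * b) = d a * b + ((Int.negOnePow i : ℤˣ) : ℤ) • (a * d b))
    (hbar : A) (hbar_central : ∀ a : A, hbar * a = a * hbar)
    (hbar_even : ∃ m : ℤ, hbar ∈ 𝒜 (2 * m))
    (T T' Tinv x : A)
    (hT_deg : T ∈ 𝒜 0) (hT'_deg : T' ∈ 𝒜 0) (hx_deg : x ∈ 𝒜 (-1))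
    (hdT : d T = 0) (hdT' : d T' = 0)
    (hTinv : T * Tinv = 1) (hTinv' : Tinv * T = 1)
    (hTquad : T * T = 1 + hbar * T)
    (hdx : d x = T * T' * T - 1)
    (hxT' : x * T' = T' * x) :
    d (Tinv * x * Tinv * x + x * Tinv * x * T) = 0 := by
  obtain ⟨m, hm⟩ := hbar_even
  -- d 1 = 0
  have hd1 : d (1 : A) = 0 := by
    have h := hleibniz 0 1 1 (SetLike.one_mem_graded 𝒜)
    simp only [one_mul, mul_one, Int.negOnePow_zero, Units.val_one, one_smul] at h
    exact (left_eq_add.mp h)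
  -- Leibniz specializations
  have lT : ∀ b : A, d (T * b) = T * d b := by
    intro b
    rw [hleibniz 0 T b hT_deg, hdT]
    simp
  have lh : ∀ b : A, d (hbar * b) = hbar * d b + d hbar * b := by
    intro b
    rw [hleibniz (2*m) hbar b hm]
    simp [add_comm]
  have lx : ∀ b : A, d (x * b) = d x * b - x * d b := by
    intro b
    rw [hleibniz (-1) x b hx_deg]
    simp [sub_eq_add_neg]
  -- T * hbar = hbar * T
  have hTh : T * hbar = hbar * T := (hbar_central T).symm
  -- d hbar = 0
  have hdhbar : d hbar = 0 := by
    have h1 : hbar * T = T * T - 1 := by rw [hTquad]; abel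
    have h2 : d (hbar * T) = 0 := by
      rw [h1, map_sub, lT, hdT, hd1, mul_zero, sub_zero]
    rw [lh T, hdT, mul_zero, zero_add] at h2
    have := congrArg (· * Tinv) h2
    simpa [mul_assoc, hTinv] using this
  -- Tinv = T - hbar
  have hTinv_eq : Tinv = T - hbar := by
    have h1 : T * (T - hbar) = 1 := by
      rw [mul_sub, hTquad, hTh]; abel
    calc Tinv = Tinv * (T * (T - hbar)) := by rw [h1, mul_one]
      _ = (Tinv * T) * (T - hbar) := by rw [mul_assoc]
      _ = T - hbar := by rw [hTinv', one_mul]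
  have lh' : ∀ b : A, d (hbar * b) = hbar * d b := by
    intro b; rw [lh b, hdhbar, zero_mul, add_zero]
  have lTi : ∀ b : A, d (Tinv * b) = Tinv * d b := by
    intro b
    rw [hTinv_eq, sub_mul, map_sub, lT, lh', ← sub_mul]
  -- main computation
  have e1 : Tinv * x * Tinv * x = Tinv * (x * (Tinv * x)) := by
    rw [mul_assoc, mul_assoc]
  have e2 : x * Tinv * x * T = x * (Tinv * (x * T)) := by
    rw [mul_assoc, mul_assoc]
  rw [map_add, e1, e2, lTi, lx, lTi, lx, lTi, lx, hdT, mul_zero, sub_zero]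
  rw [hdx, hTinv_eq]
  have cT : ∀ y : A, T * (hbar * y) = hbar * (T * y) := by
    intro y; rw [← mul_assoc, ← mul_assoc, hTh]
  have cT' : ∀ y : A, T' * (hbar * y) = hbar * (T' * y) := by
    intro y; rw [← mul_assoc, ← mul_assoc, hbar_central T']
  have cx : ∀ y : A, x * (hbar * y) = hbar * (x * y) := by
    intro y; rw [← mul_assoc, ← mul_assoc, hbar_central x]
  have cTt : T * hbar = hbar * T := hTh
  have cT't : T' * hbar = hbar * T' := (hbar_central T').symm
  have cxt : x * hbar = hbar * x := (hbar_central x).symm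
  have q : ∀ y : A, T * (T * y) = y + hbar * (T * y) := by
    intro y; rw [← mul_assoc, hTquad, add_mul, one_mul, mul_assoc]
  have s : ∀ y : A, x * (T' * y) = T' * (x * y) := by
    intro y; rw [← mul_assoc, hxT', mul_assoc]
  simp only [mul_add, add_mul, mul_sub, sub_mul, mul_one, one_mul, mul_assoc,
    q, s, cT, cT', cx, cTt, cT't, cxt, hTquad, hxT']
  noncomm_ring
end

section
/- Let R be an associative unital ring with central element ħ, containing units T_1, T_2 with T_i² = 1 + ħT_i, and an element x_1 such that x_1 T_2 = T_2 x_1. Define x_2 = T_1⁻¹ x_1 T_1⁻¹ and x_3 = T_2⁻¹ x_2 T_2⁻¹, and assume x_2 x_1 + x_1 x_2 T_1² = 0. Then x_3 x_1 + x_1 x_3 T_2 T_1² T_2⁻¹ = 0. -/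
/-- Propagation of the anticommutation relation in `H_κ`: with `T₁, T₂` Hecke
units, `x₁ T₂ = T₂ x₁`, `x₂ = T₁⁻¹ x₁ T₁⁻¹`, `x₃ = T₂⁻¹ x₂ T₂⁻¹`, and
`x₂ x₁ + x₁ x₂ T₁² = 0`, one has `x₃ x₁ + x₁ x₃ T₂ T₁² T₂⁻¹ = 0`. -/
theorem hecke_anticommutation_propagation {R : Type*} [Ring R] (hbar : R)
    (hcentral : ∀ a : R, hbar * a = a * hbar)
    (T₁ T₂ : Rˣ)
    (hT₁ : (T₁ : R) * (T₁ : R) = 1 + hbar * (T₁ : R))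
    (hT₂ : (T₂ : R) * (T₂ : R) = 1 + hbar * (T₂ : R))
    (x₁ : R) (hx₁T₂ : x₁ * (T₂ : R) = (T₂ : R) * x₁)
    (x₂ x₃ : R)
    (hx₂ : x₂ = ((T₁⁻¹ : Rˣ) : R) * x₁ * ((T₁⁻¹ : Rˣ) : R))
    (hx₃ : x₃ = ((T₂⁻¹ : Rˣ) : R) * x₂ * ((T₂⁻¹ : Rˣ) : R))
    (hanti : x₂ * x₁ + x₁ * x₂ * ((T₁ : R) * (T₁ : R)) = 0) :
    x₃ * x₁ + x₁ * x₃ * ((T₂ : R) * ((T₁ : R) * (T₁ : R)) * ((T₂⁻¹ : Rˣ) : R)) = 0 := by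
  have hinv : x₁ * ((T₂⁻¹ : Rˣ) : R) = ((T₂⁻¹ : Rˣ) : R) * x₁ := by
    calc x₁ * ((T₂⁻¹ : Rˣ) : R)
        = ((T₂⁻¹ : Rˣ) : R) * (T₂ : R) * x₁ * ((T₂⁻¹ : Rˣ) : R) := by
          simp [Units.inv_mul]
      _ = ((T₂⁻¹ : Rˣ) : R) * (x₁ * (T₂ : R)) * ((T₂⁻¹ : Rˣ) : R) := by
          rw [hx₁T₂]; noncomm_ring
      _ = ((T₂⁻¹ : Rˣ) : R) * x₁ := by
          rw [mul_assoc, mul_assoc, Units.mul_inv, mul_one]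
  have key : x₃ * x₁ + x₁ * x₃ * ((T₂ : R) * ((T₁ : R) * (T₁ : R)) * ((T₂⁻¹ : Rˣ) : R))
      = ((T₂⁻¹ : Rˣ) : R) * (x₂ * x₁ + x₁ * x₂ * ((T₁ : R) * (T₁ : R))) * ((T₂⁻¹ : Rˣ) : R) := by
    rw [hx₃, mul_add, add_mul]
    congr 1
    · -- x₃ * x₁ = T₂⁻¹ x₂ x₁ T₂⁻¹
      calc ((T₂⁻¹ : Rˣ) : R) * x₂ * ((T₂⁻¹ : Rˣ) : R) * x₁
          = ((T₂⁻¹ : Rˣ) : R) * x₂ * (((T₂⁻¹ : Rˣ) : R) * x₁) := by noncomm_ring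
        _ = ((T₂⁻¹ : Rˣ) : R) * x₂ * (x₁ * ((T₂⁻¹ : Rˣ) : R)) := by rw [hinv]
        _ = ((T₂⁻¹ : Rˣ) : R) * (x₂ * x₁) * ((T₂⁻¹ : Rˣ) : R) := by noncomm_ring
    · calc x₁ * (((T₂⁻¹ : Rˣ) : R) * x₂ * ((T₂⁻¹ : Rˣ) : R)) *
            ((T₂ : R) * ((T₁ : R) * (T₁ : R)) * ((T₂⁻¹ : Rˣ) : R))
          = x₁ * ((T₂⁻¹ : Rˣ) : R) * x₂ * (((T₂⁻¹ : Rˣ) : R) * (T₂ : R)) *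
            ((T₁ : R) * (T₁ : R)) * ((T₂⁻¹ : Rˣ) : R) := by noncomm_ring
        _ = ((T₂⁻¹ : Rˣ) : R) * x₁ * x₂ * (((T₂⁻¹ : Rˣ) : R) * (T₂ : R)) *
            ((T₁ : R) * (T₁ : R)) * ((T₂⁻¹ : Rˣ) : R) := by rw [hinv]
        _ = ((T₂⁻¹ : Rˣ) : R) * (x₁ * x₂ * ((T₁ : R) * (T₁ : R))) * ((T₂⁻¹ : Rˣ) : R) := by
            rw [Units.inv_mul]; noncomm_ring
  rw [key, hanti, mul_zero, zero_mul]
end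

section
/- Let s, t be real numbers with s irrational, 1 < s < 2 < t, and 1/s + 1/t = 1. Let ε > 0 satisfy εt < 1, and assume (m+ε)s ∉ ℤ for all integers m ≥ 0 and (m−ε)t ∉ ℤ for all integers m ≥ 1. Then every nonnegative integer occurs exactly once among the values ⌊(m+ε)s⌋ for m ∈ ℤ, m ≥ 0, together with the values ⌊(m−ε)t⌋ for m ∈ ℤ, m ≥ 1. That is, the map from (ℤ≥0) ⊔ (ℤ≥1) to ℤ≥0 given by m ↦ ⌊(m+ε)s⌋ on the first summand and m ↦ ⌊(m−ε)t⌋ on the second is a well-defined bijection. -/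
/-- The enumeration map: on the first summand `m ↦ ⌊(m+ε)s⌋` (for `m ≥ 0`), and
on the second summand `m ↦ ⌊((m+1)−ε)t⌋` (so that the second index runs over the
integers `≥ 1`). -/
noncomputable def beattyMap (s t ε : ℝ) : ℕ ⊕ ℕ → ℤ
  | .inl m => ⌊((m : ℝ) + ε) * s⌋
  | .inr m => ⌊(((m : ℝ) + 1) - ε) * t⌋

/-- Non-homogeneous Beatty-type partition: for `s` irrational with `1 < s < 2 < t`,
`1/s + 1/t = 1`, `0 < ε` with `εt < 1`, and the non-integrality conditions,
every nonnegative integer occurs exactly once among `⌊(m+ε)s⌋` (`m ≥ 0`) and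
`⌊(m−ε)t⌋` (`m ≥ 1`); i.e. the map from `ℕ ⊔ ℕ≥1` to the nonnegative integers is
a well-defined bijection. -/
theorem beatty_partition (s t ε : ℝ) (hs_irr : Irrational s)
    (hs1 : 1 < s) (hs2 : s < 2) (ht : 2 < t)
    (hst : 1 / s + 1 / t = 1) (hε : 0 < ε) (hεt : ε * t < 1)
    (hA : ∀ m : ℕ, ¬ ∃ k : ℤ, ((m : ℝ) + ε) * s = (k : ℝ))
    (hB : ∀ m : ℕ, 1 ≤ m → ¬ ∃ k : ℤ, ((m : ℝ) - ε) * t = (k : ℝ)) :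
    (∀ q : ℕ ⊕ ℕ, 0 ≤ beattyMap s t ε q) ∧
    Function.Injective (beattyMap s t ε) ∧
    (∀ n : ℤ, 0 ≤ n → ∃ q : ℕ ⊕ ℕ, beattyMap s t ε q = n) := by
  have hs0 : (0:ℝ) < s := by linarith
  have ht0 : (0:ℝ) < t := by linarith
  have hε1 : ε < 1 := by nlinarith
  -- non-integrality, extended to all integer first arguments
  have key1 : ∀ (n k : ℤ), 0 ≤ n → ((k:ℝ) + ε) * s ≠ (n:ℝ) := by
    intro n k hn h
    rcases le_or_gt 0 k with hk | hk
    · refine hA k.toNat ⟨n, ?_⟩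
      have hc : ((k.toNat : ℕ) : ℝ) = (k:ℝ) := by exact_mod_cast Int.toNat_of_nonneg hk
      rw [hc]; exact h
    · have hk1 : (k:ℝ) ≤ -1 := by exact_mod_cast (by omega : k ≤ -1)
      have h1 : ((k:ℝ) + ε) * s < 0 := mul_neg_of_neg_of_pos (by linarith) hs0
      have h2 : (0:ℝ) ≤ (n:ℝ) := by exact_mod_cast hn
      rw [h] at h1; linarith
  have key2 : ∀ (n k : ℤ), 0 ≤ n → ((k:ℝ) - ε) * t ≠ (n:ℝ) := by
    intro n k hn h
    rcases le_or_gt 1 k with hk | hk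
    · refine hB k.toNat (by omega) ⟨n, ?_⟩
      have hc : ((k.toNat : ℕ) : ℝ) = (k:ℝ) := by
        exact_mod_cast Int.toNat_of_nonneg (by omega : (0:ℤ) ≤ k)
      rw [hc]; exact h
    · have hk1 : (k:ℝ) ≤ 0 := by exact_mod_cast (by omega : k ≤ 0)
      have h1 : ((k:ℝ) - ε) * t < 0 := mul_neg_of_neg_of_pos (by linarith) ht0
      have h2 : (0:ℝ) ≤ (n:ℝ) := by exact_mod_cast hn
      rw [h] at h1; linarith
  have hsum : ∀ x : ℝ, x / s + x / t = x := by
    intro x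
    have h : x / s + x / t = x * (1/s + 1/t) := by ring
    rw [h, hst, mul_one]
  -- nonnegativity
  have hnonneg : ∀ q : ℕ ⊕ ℕ, 0 ≤ beattyMap s t ε q := by
    intro q
    cases q with
    | inl m =>
      show 0 ≤ ⌊((m:ℝ) + ε) * s⌋
      refine Int.floor_nonneg.mpr (mul_nonneg ?_ hs0.le)
      have hm : (0:ℝ) ≤ (m:ℝ) := Nat.cast_nonneg m
      linarith
    | inr m =>
      show 0 ≤ ⌊(((m:ℝ) + 1) - ε) * t⌋
      refine Int.floor_nonneg.mpr (mul_nonneg ?_ ht0.le)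
      have hm : (0:ℝ) ≤ (m:ℝ) := Nat.cast_nonneg m
      linarith
  -- basic floor bounds, strictified
  have boundA : ∀ (m : ℕ) (n : ℤ), ⌊((m:ℝ) + ε) * s⌋ = n → 0 ≤ n →
      (n:ℝ) < ((m:ℝ) + ε) * s ∧ ((m:ℝ) + ε) * s < (n:ℝ) + 1 := by
    intro m n hfl hn
    have h1 : (n:ℝ) ≤ ((m:ℝ) + ε) * s := by
      rw [← hfl]; exact Int.floor_le _
    have h2 : ((m:ℝ) + ε) * s < (n:ℝ) + 1 := by
      have h := Int.lt_floor_add_one (((m:ℝ) + ε) * s)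
      rw [hfl] at h; exact_mod_cast h
    have hne : ((m:ℝ) + ε) * s ≠ (n:ℝ) := by
      have h := key1 n (m:ℤ) hn
      simpa using h
    exact ⟨lt_of_le_of_ne h1 (fun h => hne h.symm), h2⟩
  have boundB : ∀ (m : ℕ) (n : ℤ), ⌊(((m:ℝ) + 1) - ε) * t⌋ = n → 0 ≤ n →
      (n:ℝ) < (((m:ℝ) + 1) - ε) * t ∧ (((m:ℝ) + 1) - ε) * t < (n:ℝ) + 1 := by
    intro m n hfl hn
    have h1 : (n:ℝ) ≤ (((m:ℝ) + 1) - ε) * t := by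
      rw [← hfl]; exact Int.floor_le _
    have h2 : (((m:ℝ) + 1) - ε) * t < (n:ℝ) + 1 := by
      have h := Int.lt_floor_add_one ((((m:ℝ) + 1) - ε) * t)
      rw [hfl] at h; exact_mod_cast h
    have hne : (((m:ℝ) + 1) - ε) * t ≠ (n:ℝ) := by
      have h := key2 n ((m:ℤ) + 1) hn
      push_cast at h
      exact h
    exact ⟨lt_of_le_of_ne h1 (fun h => hne h.symm), h2⟩
  -- disjointness of the two sequences
  have mixed : ∀ m m' : ℕ, ⌊((m:ℝ) + ε) * s⌋ ≠ ⌊(((m':ℝ) + 1) - ε) * t⌋ := by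
    intro m m' h
    set n := ⌊((m:ℝ) + ε) * s⌋ with hn_def
    have hn : 0 ≤ n := hnonneg (.inl m)
    obtain ⟨a1, a2⟩ := boundA m n rfl hn
    obtain ⟨b1, b2⟩ := boundB m' n h.symm hn
    have d1 : (n:ℝ) / s < (m:ℝ) + ε := (div_lt_iff₀ hs0).mpr a1
    have d2 : (m:ℝ) + ε < ((n:ℝ) + 1) / s := (lt_div_iff₀ hs0).mpr a2
    have d3 : (n:ℝ) / t < ((m':ℝ) + 1) - ε := (div_lt_iff₀ ht0).mpr b1
    have d4 : ((m':ℝ) + 1) - ε < ((n:ℝ) + 1) / t := (lt_div_iff₀ ht0).mpr b2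
    have e1 := hsum (n:ℝ)
    have e2 := hsum ((n:ℝ) + 1)
    have c1 : (n:ℝ) < (m:ℝ) + (m':ℝ) + 1 := by linarith
    have c2 : (m:ℝ) + (m':ℝ) + 1 < (n:ℝ) + 1 := by linarith
    have c1' : n < (m:ℤ) + (m':ℤ) + 1 := by exact_mod_cast c1
    have c2' : (m:ℤ) + (m':ℤ) + 1 < n + 1 := by exact_mod_cast c2
    omega
  -- strict monotonicity within each sequence
  have injA : ∀ m m' : ℕ, m < m' → ⌊((m:ℝ) + ε) * s⌋ < ⌊((m':ℝ) + ε) * s⌋ := by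
    intro m m' hmm
    have hm1 : (m:ℝ) + 1 ≤ (m':ℝ) := by exact_mod_cast hmm
    have h1 : ((m:ℝ) + ε) * s + 1 ≤ ((m':ℝ) + ε) * s := by nlinarith
    calc ⌊((m:ℝ) + ε) * s⌋ < ⌊((m:ℝ) + ε) * s⌋ + 1 := lt_add_one _
      _ = ⌊((m:ℝ) + ε) * s + 1⌋ := (Int.floor_add_one _).symm
      _ ≤ ⌊((m':ℝ) + ε) * s⌋ := Int.floor_le_floor h1
  have injB : ∀ m m' : ℕ, m < m' →
      ⌊(((m:ℝ) + 1) - ε) * t⌋ < ⌊(((m':ℝ) + 1) - ε) * t⌋ := by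
    intro m m' hmm
    have hm1 : (m:ℝ) + 1 ≤ (m':ℝ) := by exact_mod_cast hmm
    have h1 : (((m:ℝ) + 1) - ε) * t + 1 ≤ (((m':ℝ) + 1) - ε) * t := by nlinarith
    calc ⌊(((m:ℝ) + 1) - ε) * t⌋ < ⌊(((m:ℝ) + 1) - ε) * t⌋ + 1 := lt_add_one _
      _ = ⌊(((m:ℝ) + 1) - ε) * t + 1⌋ := (Int.floor_add_one _).symm
      _ ≤ ⌊(((m':ℝ) + 1) - ε) * t⌋ := Int.floor_le_floor h1
  refine ⟨hnonneg, ?_, ?_⟩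
  · -- injectivity
    intro q q' h
    match q, q' with
    | .inl m, .inl m' =>
      simp only [beattyMap] at h
      rcases lt_trichotomy m m' with hlt | heq | hgt
      · exact absurd h (injA m m' hlt).ne
      · rw [heq]
      · exact absurd h.symm (injA m' m hgt).ne
    | .inl m, .inr m' =>
      exact absurd h (mixed m m')
    | .inr m, .inl m' =>
      exact absurd h.symm (mixed m' m)
    | .inr m, .inr m' =>
      simp only [beattyMap] at h
      rcases lt_trichotomy m m' with hlt | heq | hgt
      · exact absurd h (injB m m' hlt).ne
      · rw [heq]
      · exact absurd h.symm (injB m' m hgt).ne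
  · -- surjectivity onto nonnegative integers
    intro n hn
    by_contra hcon
    push_neg at hcon
    set a : ℝ := ((n:ℝ) + 1) / s - ε with ha_def
    set b : ℝ := ((n:ℝ) + 1) / t + ε with hb_def
    have hnn : (0:ℝ) ≤ (n:ℝ) := by exact_mod_cast hn
    -- a is not an integer
    have ha_ne : (⌊a⌋:ℝ) ≠ a := by
      intro hEq
      apply key1 (n + 1) ⌊a⌋ (by omega)
      have h1 : (⌊a⌋:ℝ) + ε = ((n:ℝ) + 1) / s := by rw [hEq, ha_def]; ring
      rw [h1]
      push_cast
      field_simp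
    have hb_ne : (⌊b⌋:ℝ) ≠ b := by
      intro hEq
      apply key2 (n + 1) ⌊b⌋ (by omega)
      have h1 : (⌊b⌋:ℝ) - ε = ((n:ℝ) + 1) / t := by rw [hEq, hb_def]; ring
      rw [h1]
      push_cast
      field_simp
    -- step A : ⌊a⌋ ≤ n/s - ε
    have stepA : (⌊a⌋:ℝ) ≤ (n:ℝ) / s - ε := by
      by_contra hA'
      push_neg at hA'
      have hm0 : 0 ≤ ⌊a⌋ := by
        have h0 : (0:ℝ) ≤ (n:ℝ) / s := div_nonneg hnn hs0.le
        have h1 : (-1:ℝ) < (⌊a⌋:ℝ) := by linarith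
        have h2 : (-1:ℤ) < ⌊a⌋ := by exact_mod_cast h1
        omega
      have hmcast : ((⌊a⌋.toNat : ℕ) : ℝ) = (⌊a⌋:ℝ) := by
        exact_mod_cast Int.toNat_of_nonneg hm0
      refine hcon (.inl ⌊a⌋.toNat) ?_
      show ⌊(((⌊a⌋.toNat : ℕ) : ℝ) + ε) * s⌋ = n
      rw [hmcast]
      have hlow : (n:ℝ) ≤ ((⌊a⌋:ℝ) + ε) * s := by
        have h1 : (n:ℝ) / s < (⌊a⌋:ℝ) + ε := by linarith
        have h2 := (div_lt_iff₀ hs0).mp h1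
        linarith
      have hhigh : ((⌊a⌋:ℝ) + ε) * s < (n:ℝ) + 1 := by
        have hlt : (⌊a⌋:ℝ) < a := lt_of_le_of_ne (Int.floor_le a) ha_ne
        have h1 : (⌊a⌋:ℝ) + ε < ((n:ℝ) + 1) / s := by rw [ha_def] at hlt; linarith
        have h2 := (lt_div_iff₀ hs0).mp h1
        linarith
      rw [Int.floor_eq_iff]
      constructor
      · exact hlow
      · push_cast; exact hhigh
    -- step B : ⌊b⌋ ≤ n/t + ε
    have stepB : (⌊b⌋:ℝ) ≤ (n:ℝ) / t + ε := by
      by_contra hB'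
      push_neg at hB'
      have hm1 : 1 ≤ ⌊b⌋ := by
        have h0 : (0:ℝ) ≤ (n:ℝ) / t := div_nonneg hnn ht0.le
        have h1 : (0:ℝ) < (⌊b⌋:ℝ) := by linarith
        have h2 : (0:ℤ) < ⌊b⌋ := by exact_mod_cast h1
        omega
      have hmcast : (((⌊b⌋.toNat - 1 : ℕ)) : ℝ) + 1 = (⌊b⌋:ℝ) := by
        have h1 : ((⌊b⌋.toNat - 1 : ℕ) : ℤ) + 1 = ⌊b⌋ := by omega
        exact_mod_cast h1
      refine hcon (.inr (⌊b⌋.toNat - 1)) ?_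
      show ⌊((((⌊b⌋.toNat - 1 : ℕ)) : ℝ) + 1 - ε) * t⌋ = n
      rw [hmcast]
      have hlow : (n:ℝ) ≤ ((⌊b⌋:ℝ) - ε) * t := by
        have h1 : (n:ℝ) / t < (⌊b⌋:ℝ) - ε := by linarith
        have h2 := (div_lt_iff₀ ht0).mp h1
        linarith
      have hhigh : ((⌊b⌋:ℝ) - ε) * t < (n:ℝ) + 1 := by
        have hlt : (⌊b⌋:ℝ) < b := lt_of_le_of_ne (Int.floor_le b) hb_ne
        have h1 : (⌊b⌋:ℝ) - ε < ((n:ℝ) + 1) / t := by rw [hb_def] at hlt; linarith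
        have h2 := (lt_div_iff₀ ht0).mp h1
        linarith
      rw [Int.floor_eq_iff]
      constructor
      · exact hlow
      · push_cast; exact hhigh
    -- combine: n - 1 < ⌊a⌋ + ⌊b⌋ ≤ n, hence equal, hence ⌊a⌋ = n/s - ε : contradiction
    have e1 := hsum ((n:ℝ) + 1)
    have e2 := hsum (n:ℝ)
    have f1 : a - 1 < (⌊a⌋:ℝ) := Int.sub_one_lt_floor a
    have f2 : b - 1 < (⌊b⌋:ℝ) := Int.sub_one_lt_floor b
    have hab : a + b = (n:ℝ) + 1 := by rw [ha_def, hb_def]; linarith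
    have r1 : (n:ℝ) - 1 < (⌊a⌋:ℝ) + (⌊b⌋:ℝ) := by linarith
    have r2 : (⌊a⌋:ℝ) + (⌊b⌋:ℝ) ≤ (n:ℝ) := by linarith
    have z1 : n - 1 < ⌊a⌋ + ⌊b⌋ := by exact_mod_cast r1
    have z2 : ⌊a⌋ + ⌊b⌋ ≤ n := by exact_mod_cast r2
    have zeq : ⌊a⌋ + ⌊b⌋ = n := by omega
    have zeqR : (⌊a⌋:ℝ) + (⌊b⌋:ℝ) = (n:ℝ) := by exact_mod_cast zeq
    have hEqA : (⌊a⌋:ℝ) = (n:ℝ) / s - ε := by linarith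
    apply key1 n ⌊a⌋ hn
    rw [hEqA]
    field_simp
    ring
end

section
/- Let X be a set and f_i, f_j, f_k : [0,1] → X. For indices a, b ∈ {i, j, k} and θ ∈ [0,1], let sw^{ab}_θ denote the naive switching map acting on triples of functions, exchanging the values of the a-th and b-th functions on the interval (θ, 1] and leaving the third function unchanged. Then for θ₁ ≤ θ₂: sw^{jk}_{θ₂} ∘ sw^{ij}_{θ₁} = sw^{ij}_{θ₁} ∘ sw^{ik}_{θ₂} as maps on triples (f_i, f_j, f_k). -/
/-- `cut θ f g` follows `f` on `[0, θ]` and `g` on `(θ, 1]`. -/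
noncomputable def cut {X : Type*} (θ : ℝ) (f g : ℝ → X) : ℝ → X :=
  fun x => if x ≤ θ then f x else g x

/-- The naive switching map `sw^{ij}` on triples `(f_i, f_j, f_k)`: exchange the
first two components on `(θ, 1]`. -/
noncomputable def swIJ {X : Type*} (θ : ℝ) (t : (ℝ → X) × (ℝ → X) × (ℝ → X)) :
    (ℝ → X) × (ℝ → X) × (ℝ → X) :=
  (cut θ t.1 t.2.1, cut θ t.2.1 t.1, t.2.2)

/-- The naive switching map `sw^{ik}`: exchange the first and third components on
`(θ, 1]`. -/
noncomputable def swIK {X : Type*} (θ : ℝ) (t : (ℝ → X) × (ℝ → X) × (ℝ → X)) :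
    (ℝ → X) × (ℝ → X) × (ℝ → X) :=
  (cut θ t.1 t.2.2, t.2.1, cut θ t.2.2 t.1)

/-- The naive switching map `sw^{jk}`: exchange the second and third components on
`(θ, 1]`. -/
noncomputable def swJK {X : Type*} (θ : ℝ) (t : (ℝ → X) × (ℝ → X) × (ℝ → X)) :
    (ℝ → X) × (ℝ → X) × (ℝ → X) :=
  (t.1, cut θ t.2.1 t.2.2, cut θ t.2.2 t.2.1)

/-- Commutation relation of Proposition 2.5: for `θ₁ ≤ θ₂`,
`sw^{jk}_{θ₂} ∘ sw^{ij}_{θ₁} = sw^{ij}_{θ₁} ∘ sw^{ik}_{θ₂}` on triples of paths. -/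
theorem naive_switch_commutation {X : Type*}
    (θ₁ θ₂ : ℝ) (hθ₁ : θ₁ ∈ Set.Icc (0 : ℝ) 1) (hθ₂ : θ₂ ∈ Set.Icc (0 : ℝ) 1)
    (h : θ₁ ≤ θ₂) (t : (ℝ → X) × (ℝ → X) × (ℝ → X)) :
    swJK θ₂ (swIJ θ₁ t) = swIJ θ₁ (swIK θ₂ t) := by
  simp only [swJK, swIJ, swIK, Prod.mk.injEq]
  refine ⟨?_, ?_, ?_⟩ <;> funext x <;> simp only [cut] <;>
    split_ifs <;> first | rfl | linarith
end
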